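/- arXiv:2211.07503 — 4 statements merged into one kernel-verified Lean document; each statement's English description precedes it below -/
import Mathlib

section
/- Let A be an ℝ^n-valued random vector with i.i.d. coordinates each having a density bounded by 1, and let y ∈ ℝ^n with 1 ≤ ‖y‖_∞. Then for any θ ≥ 0, P(|⟨A, y⟩| ≤ θ) ≤ 2θ. -/
open MeasureTheory ProbabilityTheory

lemma aux_conv {Ω : Type*} [MeasurableSpace Ω] (μ : Measure Ω) [IsProbabilityMeasure μ]
    (X Y : Ω → ℝ) (hX : Measurable X) (hY : Measurable Y) (h : IndepFun X Y μ)
    (hd : ∀ s : Set ℝ, MeasurableSet s → μ.map X s ≤ volume s) (θ : ℝ) (hθ : 0 ≤ θ) :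
    μ {ω | |X ω + Y ω| ≤ θ} ≤ ENNReal.ofReal (2 * θ) := by
  have hmap : μ.map (fun ω => (X ω, Y ω)) = (μ.map X).prod (μ.map Y) :=
    (indepFun_iff_map_prod_eq_prod_map_map hX.aemeasurable hY.aemeasurable).mp h
  have hsm : MeasurableSet {p : ℝ × ℝ | |p.1 + p.2| ≤ θ} :=
    measurableSet_le ((measurable_fst.add measurable_snd).abs) measurable_const
  have h1 : μ {ω | |X ω + Y ω| ≤ θ}
      = μ.map (fun ω => (X ω, Y ω)) {p : ℝ × ℝ | |p.1 + p.2| ≤ θ} := by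
    rw [Measure.map_apply (hX.prodMk hY) hsm]; rfl
  rw [h1, hmap, Measure.prod_apply_symm hsm]
  have key : ∀ b : ℝ, μ.map X ((fun x => (x, b)) ⁻¹' {p : ℝ × ℝ | |p.1 + p.2| ≤ θ})
      ≤ ENNReal.ofReal (2 * θ) := by
    intro b
    have hset : ((fun x => (x, b)) ⁻¹' {p : ℝ × ℝ | |p.1 + p.2| ≤ θ})
        = Set.Icc (-θ - b) (θ - b) := by
      ext x
      simp only [Set.mem_preimage, Set.mem_setOf_eq, abs_le, Set.mem_Icc]
      constructor <;> rintro ⟨h1, h2⟩ <;> constructor <;> linarith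
    rw [hset]
    calc μ.map X (Set.Icc (-θ - b) (θ - b)) ≤ volume (Set.Icc (-θ - b) (θ - b)) :=
          hd _ measurableSet_Icc
      _ = ENNReal.ofReal (2 * θ) := by rw [Real.volume_Icc]; ring_nf
  calc ∫⁻ b, μ.map X ((fun x => (x, b)) ⁻¹' {p : ℝ × ℝ | |p.1 + p.2| ≤ θ}) ∂(μ.map Y)
      ≤ ∫⁻ _, ENNReal.ofReal (2 * θ) ∂(μ.map Y) := lintegral_mono key
    _ = ENNReal.ofReal (2 * θ) := by
        have : IsProbabilityMeasure (μ.map Y) := Measure.isProbabilityMeasure_map hY.aemeasurable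
        simp

/-- If `A` has i.i.d. coordinates each with a density bounded by 1
(formalized: each marginal law is dominated by Lebesgue measure), and `‖y‖_∞ ≥ 1`,
then `P(|⟨A, y⟩| ≤ θ) ≤ 2θ` for any `θ ≥ 0`. -/
theorem stmt3 {n : ℕ} {Ω : Type*} [MeasurableSpace Ω]
    (μ : Measure Ω) [IsProbabilityMeasure μ]
    (A : Fin n → Ω → ℝ) (hmeas : ∀ i, Measurable (A i))
    (hindep : iIndepFun A μ)
    (hident : ∀ i j, IdentDistrib (A i) (A j) μ μ)
    (hdens : ∀ i, ∀ s : Set ℝ, MeasurableSet s → μ.map (A i) s ≤ volume s)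
    (y : Fin n → ℝ) (hy : 1 ≤ ‖y‖) (θ : ℝ) (hθ : 0 ≤ θ) :
    μ {ω | |∑ i, A i ω * y i| ≤ θ} ≤ ENNReal.ofReal (2 * θ) := by
  classical
  -- find a coordinate with |y i₀| ≥ 1
  obtain ⟨i₀, hi₀⟩ : ∃ i, 1 ≤ |y i| := by
    by_contra hc
    push_neg at hc
    have : ‖y‖ < 1 := by
      rw [pi_norm_lt_iff one_pos]
      intro i; simpa [Real.norm_eq_abs] using hc i
    linarith
  have hy0 : y i₀ ≠ 0 := by intro h; rw [h] at hi₀; simp at hi₀; linarith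
  set B : Fin n → Ω → ℝ := fun i ω => A i ω * y i with hB
  have hBmeas : ∀ i, Measurable (B i) := fun i => (hmeas i).mul_const _
  have hBindep : iIndepFun B μ :=
    hindep.comp (fun i x => x * y i) (fun i => measurable_mul_const _)
  have hIndep : IndepFun (B i₀) (∑ j ∈ Finset.univ.erase i₀, B j) μ :=
    (hBindep.indepFun_finsetSum_of_notMem hBmeas (Finset.notMem_erase i₀ _)).symm
  have hYmeas : Measurable (∑ j ∈ Finset.univ.erase i₀, B j) := by
    have : (∑ j ∈ Finset.univ.erase i₀, B j) = fun ω => ∑ j ∈ Finset.univ.erase i₀, B j ω := by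
      ext ω; simp
    rw [this]
    exact Finset.measurable_sum _ fun j _ => hBmeas j
  -- density bound for B i₀
  have hdB : ∀ s : Set ℝ, MeasurableSet s → μ.map (B i₀) s ≤ volume s := by
    intro s hs
    have hmm : μ.map (B i₀) = (μ.map (A i₀)).map (· * y i₀) :=
      (Measure.map_map (measurable_mul_const _) (hmeas i₀)).symm
    rw [hmm, Measure.map_apply (measurable_mul_const _) hs]
    calc μ.map (A i₀) ((· * y i₀) ⁻¹' s) ≤ volume ((· * y i₀) ⁻¹' s) :=
          hdens i₀ _ ((measurable_mul_const _) hs)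
      _ = ENNReal.ofReal |(y i₀)⁻¹| * volume s := Real.volume_preimage_mul_right hy0 s
      _ ≤ 1 * volume s := by
          gcongr
          apply ENNReal.ofReal_le_one.mpr
          rw [abs_inv]
          exact inv_le_one_of_one_le₀ hi₀
      _ = volume s := one_mul _
  have hsum : ∀ ω, ∑ i, A i ω * y i = B i₀ ω + (∑ j ∈ Finset.univ.erase i₀, B j) ω := by
    intro ω
    simp only [Finset.sum_apply]
    rw [← Finset.sum_erase_add Finset.univ _ (Finset.mem_univ i₀)]
    ring
  have := aux_conv μ (B i₀) (∑ j ∈ Finset.univ.erase i₀, B j) (hBmeas i₀) hYmeas hIndep hdB θ hθ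
  have hset : {ω | |∑ i, A i ω * y i| ≤ θ}
      = {ω | |B i₀ ω + (∑ j ∈ Finset.univ.erase i₀, B j) ω| ≤ θ} := by
    ext ω; rw [Set.mem_setOf_eq, Set.mem_setOf_eq, hsum ω]
  rw [hset]
  exact this
end

section
/- Let A ∈ ℝ^n be a random vector with i.i.d. coordinates with density bounded by 1 and tail function Q(t) = P(|A_1| > t). Let Ā denote the coordinatewise b-bit truncation, so that ‖A − Ā‖_∞ ≤ M·2^{−b} on the event ‖A‖_∞ ≤ M. Then for y ∈ ℝ^n with 1 ≤ ‖y‖_∞ ≤ β and any θ, M ≥ 0: P(|⟨Ā, y⟩| ≤ θ) ≤ 2θ + 2Mnβ/2^b + n·Q(M). -/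
open MeasureTheory ProbabilityTheory

/-- Anti-concentration of the truncated vector. `A` has i.i.d. coordinates
with density bounded by 1 and tail function `Q(t) = P(|A_1| > t)`; `Ā` is the coordinatewise
`b`-bit truncation (so `|A_i − Ā_i| ≤ |A_i|·2^{−b}`). For `y` with `1 ≤ ‖y‖_∞ ≤ β` and
`θ, M ≥ 0`: `P(|⟨Ā, y⟩| ≤ θ) ≤ 2θ + 2Mnβ/2^b + n·Q(M)`. -/
theorem stmt4 {n : ℕ} (hn : 0 < n) {Ω : Type*} [MeasurableSpace Ω]
    (μ : Measure Ω) [IsProbabilityMeasure μ]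
    (A Abar : Fin n → Ω → ℝ)
    (hmeasA : ∀ i, Measurable (A i)) (hmeasAbar : ∀ i, Measurable (Abar i))
    (hindep : iIndepFun A μ)
    (hident : ∀ i j, IdentDistrib (A i) (A j) μ μ)
    (hdens : ∀ i, ∀ s : Set ℝ, MeasurableSet s → μ.map (A i) s ≤ volume s)
    (b : ℕ) (htrunc : ∀ i ω, |A i ω - Abar i ω| ≤ |A i ω| / 2 ^ b)
    (y : Fin n → ℝ) (β : ℝ) (hy1 : 1 ≤ ‖y‖) (hyβ : ‖y‖ ≤ β)
    (θ M : ℝ) (hθ : 0 ≤ θ) (hM : 0 ≤ M) :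
    μ {ω | |∑ i, Abar i ω * y i| ≤ θ}
      ≤ ENNReal.ofReal (2 * θ + 2 * M * n * β / 2 ^ b)
        + n * μ {ω | M < |A ⟨0, hn⟩ ω|} := by
  classical
  -- pick a coordinate where the sup norm is attained
  obtain ⟨i0, -, hi0⟩ := Finset.exists_mem_eq_sup (Finset.univ : Finset (Fin n))
    ⟨⟨0, hn⟩, Finset.mem_univ _⟩ (fun i => ‖y i‖₊)
  have hynorm : ‖y‖ = |y i0| := by
    rw [Pi.norm_def, hi0]
    simp [Real.norm_eq_abs]
  set c : ℝ := y i0 with hc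
  have hc1 : 1 ≤ |c| := hynorm ▸ hy1
  have hc0 : c ≠ 0 := by
    intro h; rw [h, abs_zero] at hc1; linarith
  have hβ0 : 0 ≤ β := le_trans (by linarith) hyβ
  have hyi : ∀ i, |y i| ≤ β := by
    intro i
    calc |y i| = ‖y i‖ := (Real.norm_eq_abs _).symm
    _ ≤ ‖y‖ := norm_le_pi_norm y i
    _ ≤ β := hyβ
  -- the weighted coordinates
  set B : Fin n → Ω → ℝ := fun i ω => A i ω * y i with hB
  have hmeasB : ∀ i, Measurable (B i) := fun i => (hmeasA i).mul_const _
  have hindepB : iIndepFun B μ :=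
    hindep.comp (fun i x => x * y i) (fun i => measurable_mul_const _)
  set S : Ω → ℝ := ∑ j ∈ Finset.univ.erase i0, B j with hS
  set X : Ω → ℝ := B i0 with hX
  have hSapp : ∀ ω, S ω = ∑ j ∈ Finset.univ.erase i0, B j ω := fun ω => by
    simp [hS]
  have hmS : Measurable S := by
    have h : S = fun ω => ∑ j ∈ Finset.univ.erase i0, B j ω := funext hSapp
    rw [h]; exact Finset.measurable_sum _ (fun i _ => hmeasB i)
  have hmX : Measurable X := hmeasB i0
  have hSX : IndepFun S X μ :=
    hindepB.indepFun_finsetSum_of_notMem hmeasB (Finset.notMem_erase i0 Finset.univ)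
  -- density bound for X
  have hdensX : ∀ s : Set ℝ, MeasurableSet s → μ.map X s ≤ volume s := by
    intro s hs
    have h1 : μ.map X s = μ.map (A i0) ((· * c) ⁻¹' s) := by
      rw [Measure.map_apply hmX hs,
        Measure.map_apply (hmeasA i0) ((measurable_mul_const c) hs)]
      rfl
    rw [h1]
    calc μ.map (A i0) ((· * c) ⁻¹' s) ≤ volume ((· * c) ⁻¹' s) :=
          hdens i0 _ ((measurable_mul_const c) hs)
    _ = ENNReal.ofReal |c⁻¹| * volume s := Real.volume_preimage_mul_right hc0 s
    _ ≤ 1 * volume s := by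
        refine mul_le_mul_left (ENNReal.ofReal_le_one.mpr ?_) _
        rw [abs_inv]
        exact inv_le_one_of_one_le₀ hc1
    _ = volume s := one_mul _
  -- anticoncentration of S + X
  set θ' : ℝ := θ + M * n * β / 2 ^ b with hθ'
  have hθ'0 : 0 ≤ θ' := by
    rw [hθ']; positivity
  have hanti : μ {ω | |S ω + X ω| ≤ θ'} ≤ ENNReal.ofReal (2 * θ') := by
    set T : Set (ℝ × ℝ) := {p | |p.1 + p.2| ≤ θ'} with hT
    have hTm : MeasurableSet T :=
      measurableSet_le ((measurable_fst.add measurable_snd).abs) measurable_const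
    have hmap : μ.map (fun ω => (S ω, X ω)) = (μ.map S).prod (μ.map X) :=
      (indepFun_iff_map_prod_eq_prod_map_map hmS.aemeasurable hmX.aemeasurable).mp hSX
    have h1 : μ {ω | |S ω + X ω| ≤ θ'} = μ.map (fun ω => (S ω, X ω)) T := by
      rw [Measure.map_apply (hmS.prodMk hmX) hTm]
      rfl
    rw [h1, hmap, Measure.prod_apply hTm]
    have hslice : ∀ s : ℝ, μ.map X (Prod.mk s ⁻¹' T) ≤ ENNReal.ofReal (2 * θ') := by
      intro s
      have hset : Prod.mk s ⁻¹' T = Set.Icc (-θ' - s) (θ' - s) := by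
        ext x
        simp only [Set.mem_preimage, hT, Set.mem_setOf_eq, Set.mem_Icc, abs_le]
        constructor <;> intro h <;> constructor <;> linarith [h.1, h.2]
      calc μ.map X (Prod.mk s ⁻¹' T) ≤ volume (Prod.mk s ⁻¹' T) :=
            hdensX _ (measurable_prodMk_left hTm)
      _ = ENNReal.ofReal ((θ' - s) - (-θ' - s)) := by rw [hset, Real.volume_Icc]
      _ = ENNReal.ofReal (2 * θ') := by ring_nf
    calc ∫⁻ s, μ.map X (Prod.mk s ⁻¹' T) ∂(μ.map S)
        ≤ ∫⁻ _, ENNReal.ofReal (2 * θ') ∂(μ.map S) := lintegral_mono hslice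
    _ = ENNReal.ofReal (2 * θ') * μ.map S Set.univ := lintegral_const _
    _ = ENNReal.ofReal (2 * θ') := by
        rw [Measure.map_apply hmS MeasurableSet.univ, Set.preimage_univ, measure_univ, mul_one]
  -- event inclusion
  have hincl : {ω | |∑ i, Abar i ω * y i| ≤ θ} ⊆
      {ω | |S ω + X ω| ≤ θ'} ∪ ⋃ i, {ω | M < |A i ω|} := by
    intro ω hω
    by_cases hA : ∃ i, M < |A i ω|
    · exact Or.inr (Set.mem_iUnion.mpr ⟨hA.choose, hA.choose_spec⟩)
    · push_neg at hA
      left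
      have hsum : S ω + X ω = ∑ i, A i ω * y i := by
        rw [hSapp]
        exact Finset.sum_erase_add _ _ (Finset.mem_univ i0)
      have hdiff : |∑ i, A i ω * y i - ∑ i, Abar i ω * y i| ≤ M * n * β / 2 ^ b := by
        rw [← Finset.sum_sub_distrib]
        calc |∑ i, (A i ω * y i - Abar i ω * y i)|
            ≤ ∑ i, |A i ω * y i - Abar i ω * y i| := Finset.abs_sum_le_sum_abs _ _
        _ ≤ ∑ _i : Fin n, M / 2 ^ b * β := by
            apply Finset.sum_le_sum
            intro i _
            rw [← sub_mul, abs_mul]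
            have h1 : |A i ω - Abar i ω| ≤ M / 2 ^ b :=
              le_trans (htrunc i ω) (by
                apply div_le_div_of_nonneg_right (hA i) (by positivity))
            exact mul_le_mul h1 (hyi i) (abs_nonneg _) (by positivity)
        _ = M * n * β / 2 ^ b := by
            rw [Finset.sum_const, Finset.card_univ, Fintype.card_fin, nsmul_eq_mul]
            ring
      have hω' : |∑ i, Abar i ω * y i| ≤ θ := hω
      simp only [Set.mem_setOf_eq, hsum]
      calc |∑ i, A i ω * y i|
          ≤ |∑ i, Abar i ω * y i| + |∑ i, A i ω * y i - ∑ i, Abar i ω * y i| := by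
            have := abs_add_le (∑ i, Abar i ω * y i) (∑ i, A i ω * y i - ∑ i, Abar i ω * y i)
            simp only [add_sub_cancel] at this
            exact this
      _ ≤ θ + M * n * β / 2 ^ b := add_le_add hω' hdiff
  -- put things together
  have hQ : ∀ i : Fin n, μ {ω | M < |A i ω|} = μ {ω | M < |A ⟨0, hn⟩ ω|} := by
    intro i
    have hs : MeasurableSet {x : ℝ | M < |x|} :=
      measurableSet_lt measurable_const measurable_abs
    exact (hident i ⟨0, hn⟩).measure_mem_eq hs
  calc μ {ω | |∑ i, Abar i ω * y i| ≤ θ}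
      ≤ μ ({ω | |S ω + X ω| ≤ θ'} ∪ ⋃ i, {ω | M < |A i ω|}) := measure_mono hincl
  _ ≤ μ {ω | |S ω + X ω| ≤ θ'} + μ (⋃ i, {ω | M < |A i ω|}) := measure_union_le _ _
  _ ≤ ENNReal.ofReal (2 * θ') + ∑ i, μ {ω | M < |A i ω|} := by
      refine add_le_add hanti ?_
      exact le_trans (measure_iUnion_le _) (le_of_eq (tsum_fintype _))
  _ = ENNReal.ofReal (2 * θ + 2 * M * n * β / 2 ^ b) + n * μ {ω | M < |A ⟨0, hn⟩ ω|} := by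
      congr 1
      · congr 1; rw [hθ']; ring
      · simp only [hQ]
        rw [Finset.sum_const, Finset.card_univ, Fintype.card_fin, nsmul_eq_mul]
end

section
/- Let T be an invertible linear map on ℝ^n with B(0,1) ⊆ T(S_δ) ⊆ B(0, 2√n), where S_δ = {x : ‖Ax‖_∞ ≤ δ} ∩ [−1,1]^n. If every nonzero vector of the lattice (1/(2√n))·T(ℤ^n) has norm greater than 1, then disc(A) > δ. -/
/-- The discrepancy `disc(A) = min_{x ∈ {±1}^n} ‖Ax‖_∞`. -/
noncomputable def disc {m n : ℕ} (A : Matrix (Fin m) (Fin n) ℝ) : ℝ :=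
  sInf {d : ℝ | ∃ x : Fin n → ℝ, (∀ j, x j = 1 ∨ x j = -1) ∧ d = ‖A.mulVec x‖}

/-- Correctness of the certification algorithm. Let
`S_δ = {x : ‖Ax‖_∞ ≤ δ} ∩ [−1,1]^n` and `T` invertible linear with
`B(0,1) ⊆ T(S_δ) ⊆ B(0, 2√n)`. If every nonzero vector of the lattice
`(1/(2√n))·T(ℤ^n)` has norm greater than 1, then `disc(A) > δ`. -/
theorem stmt14 {m n : ℕ} (hn : 0 < n)
    (A : Matrix (Fin m) (Fin n) ℝ) (δ : ℝ) (hδ : 0 < δ)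
    (T : EuclideanSpace ℝ (Fin n) ≃ₗ[ℝ] EuclideanSpace ℝ (Fin n))
    (hT1 : Metric.closedBall (0 : EuclideanSpace ℝ (Fin n)) 1 ⊆
      T '' {x : EuclideanSpace ℝ (Fin n) |
        (∀ i, |∑ j, A i j * x j| ≤ δ) ∧ ∀ j, |x j| ≤ 1})
    (hT2 : T '' {x : EuclideanSpace ℝ (Fin n) |
        (∀ i, |∑ j, A i j * x j| ≤ δ) ∧ ∀ j, |x j| ≤ 1} ⊆
      Metric.closedBall 0 (2 * Real.sqrt n))
    (hlat : ∀ x : Fin n → ℤ, x ≠ 0 →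
      1 < ‖(1 / (2 * Real.sqrt n)) • T (WithLp.toLp 2 (fun i => (x i : ℝ)))‖) :
    δ < disc A := by
  set S : Set ℝ := {d : ℝ | ∃ x : Fin n → ℝ, (∀ j, x j = 1 ∨ x j = -1) ∧ d = ‖A.mulVec x‖}
    with hS
  have hne : S.Nonempty := ⟨‖A.mulVec (fun _ => 1)‖, fun _ => 1, fun _ => Or.inl rfl, rfl⟩
  have hfin : S.Finite := by
    have hsub : S ⊆ (fun x : Fin n → ℝ => ‖A.mulVec x‖) ''
        (Set.pi Set.univ fun _ => ({1, -1} : Set ℝ)) := by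
      rintro d ⟨x, hx, rfl⟩
      exact ⟨x, fun j _ => by rcases hx j with h | h <;> simp [h], rfl⟩
    exact (Set.Finite.image _ (Set.Finite.pi fun _ =>
      (Set.finite_singleton (-1 : ℝ)).insert 1)).subset hsub
  have hmem : sInf S ∈ S := hne.csInf_mem hfin
  obtain ⟨x, hx, hxn⟩ := hmem
  rw [disc, ← hS, hxn]
  by_contra hle
  push_neg at hle
  -- hle : ‖A.mulVec x‖ ≤ δ
  have hxS : (WithLp.toLp 2 x : EuclideanSpace ℝ (Fin n)) ∈ {x : EuclideanSpace ℝ (Fin n) |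
      (∀ i, |∑ j, A i j * x j| ≤ δ) ∧ ∀ j, |x j| ≤ 1} := by
    constructor
    · intro i
      show |∑ j, A i j * x j| ≤ δ
      have h1 : |A.mulVec x i| ≤ ‖A.mulVec x‖ := by
        simpa using norm_le_pi_norm (A.mulVec x) i
      have h2 : A.mulVec x i = ∑ j, A i j * x j := by
        simp [Matrix.mulVec, dotProduct]
      rw [← h2]
      exact h1.trans hle
    · intro j
      rcases hx j with h | h <;> simp [h]
  have hball := hT2 ⟨WithLp.toLp 2 x, hxS, rfl⟩
  rw [Metric.mem_closedBall, dist_zero_right] at hball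
  set z : Fin n → ℤ := fun j => if x j = 1 then 1 else -1 with hz
  have hzx : (fun i => (z i : ℝ)) = x := by
    funext j
    rcases hx j with h | h <;> simp [hz, h] <;> norm_num
  have hz0 : z ≠ 0 := by
    intro h
    have := congrFun h ⟨0, hn⟩
    simp [hz] at this
    split at this <;> simp_all
  have hlt := hlat z hz0
  rw [hzx] at hlt
  have hs : (0 : ℝ) < 2 * Real.sqrt n := by positivity
  rw [norm_smul] at hlt
  have : ‖(1 : ℝ) / (2 * Real.sqrt n)‖ * ‖T (WithLp.toLp 2 x)‖ ≤ 1 := by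
    rw [Real.norm_eq_abs, abs_of_pos (by positivity)]
    calc 1 / (2 * Real.sqrt n) * ‖T (WithLp.toLp 2 x)‖ ≤ 1 / (2 * Real.sqrt n) * (2 * Real.sqrt n) := by
          apply mul_le_mul_of_nonneg_left hball (by positivity)
      _ = 1 := by field_simp
  linarith
end

section
/- Let a_1,…,a_n be i.i.d. uniform on {0,…,2^b − 1} with b ≥ C n² for a sufficiently large absolute constant C. Then with probability 1 − o(1) (as n → ∞), there is no nonzero integer vector y with ‖y‖_∞ ≤ 2^{n/2+1}√n satisfying |Σ_i a_i y_i| ≤ 2^{n/2+1}√n. (This implies the nonexistence of a perfect partition, since any signing is such a y with |Σ a_i x_i| ≤ 1.) -/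
open Filter
open scoped Classical


lemma fiber_bound (n b M : ℕ) (y : Fin n → ℤ) (i₀ : Fin n) (hy : y i₀ ≠ 0) :
    (Finset.univ.filter (fun a : Fin n → Fin (2 ^ b) =>
      |∑ i, ((a i : ℕ) : ℤ) * y i| ≤ (M : ℤ))).card ≤ (2 * M + 1) * (2 ^ b) ^ (n - 1) := by
  classical
  have key := Finset.card_le_card_of_injOn
    (f := fun a : Fin n → Fin (2 ^ b) =>
      ((fun j : {j : Fin n // j ≠ i₀} => a j), ∑ i, ((a i : ℕ) : ℤ) * y i))
    (s := Finset.univ.filter (fun a : Fin n → Fin (2 ^ b) =>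
      |∑ i, ((a i : ℕ) : ℤ) * y i| ≤ (M : ℤ)))
    (t := (Finset.univ : Finset ({j : Fin n // j ≠ i₀} → Fin (2 ^ b))) ×ˢ
      Finset.Icc (-(M : ℤ)) (M : ℤ))
    (by
      intro a ha
      simp only [Finset.mem_coe, Finset.mem_filter, Finset.mem_univ, true_and] at ha
      simp only [Finset.mem_coe, Finset.mem_product, Finset.mem_univ, true_and, Finset.mem_Icc]
      exact abs_le.mp ha)
    (by
      intro a ha a' ha' h
      simp only [Prod.mk.injEq] at h
      obtain ⟨h1, h2⟩ := h
      have hoff : ∀ j : Fin n, j ≠ i₀ → a j = a' j := by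
        intro j hj
        exact congrFun h1 ⟨j, hj⟩
      have hsum : ((a i₀ : ℕ) : ℤ) * y i₀ = ((a' i₀ : ℕ) : ℤ) * y i₀ := by
        have e1 : ∑ i, ((a i : ℕ) : ℤ) * y i
            = ((a i₀ : ℕ) : ℤ) * y i₀ + ∑ i ∈ Finset.univ.erase i₀, ((a i : ℕ) : ℤ) * y i :=
          (Finset.add_sum_erase _ _ (Finset.mem_univ i₀)).symm
        have e2 : ∑ i, ((a' i : ℕ) : ℤ) * y i
            = ((a' i₀ : ℕ) : ℤ) * y i₀ + ∑ i ∈ Finset.univ.erase i₀, ((a' i : ℕ) : ℤ) * y i :=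
          (Finset.add_sum_erase _ _ (Finset.mem_univ i₀)).symm
        have e3 : ∑ i ∈ Finset.univ.erase i₀, ((a i : ℕ) : ℤ) * y i
            = ∑ i ∈ Finset.univ.erase i₀, ((a' i : ℕ) : ℤ) * y i := by
          apply Finset.sum_congr rfl
          intro j hj
          rw [hoff j (Finset.ne_of_mem_erase hj)]
        rw [e1, e2, e3] at h2
        exact add_right_cancel h2
      have : a i₀ = a' i₀ := by
        have := mul_right_cancel₀ hy hsum
        exact Fin.ext (by exact_mod_cast this)
      funext j
      by_cases hj : j = i₀
      · rw [hj]; exact this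
      · exact hoff j hj)
  have heq : ((Finset.univ : Finset ({j : Fin n // j ≠ i₀} → Fin (2 ^ b))) ×ˢ
      Finset.Icc (-(M : ℤ)) (M : ℤ)).card = (2 * M + 1) * (2 ^ b) ^ (n - 1) := by
    have hcardsub : Fintype.card {j : Fin n // j ≠ i₀} = n - 1 := by
      simp [Fintype.card_subtype_compl]
    have h1 : ((M : ℤ) + 1 - -(M : ℤ)).toNat = 2 * M + 1 := by clear key; omega
    simp only [Finset.card_product, Finset.card_univ, Int.card_Icc,
      Fintype.card_fun, Fintype.card_fin, hcardsub, h1]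
    ring
  exact key.trans (le_of_eq heq)

lemma count_bound (n b M : ℕ) :
    (Finset.univ.filter (fun a : Fin n → Fin (2 ^ b) =>
      ∃ y : Fin n → ℤ, y ≠ 0 ∧ (∀ i, |y i| ≤ (M : ℤ)) ∧
        |∑ i, ((a i : ℕ) : ℤ) * y i| ≤ (M : ℤ))).card
      ≤ (2 * M + 1) ^ (n + 1) * (2 ^ b) ^ (n - 1) := by
  classical
  set Y : Finset (Fin n → ℤ) :=
    (Fintype.piFinset (fun _ : Fin n => Finset.Icc (-(M : ℤ)) (M : ℤ))).filter (fun y => y ≠ 0)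
    with hY
  have hsub : (Finset.univ.filter (fun a : Fin n → Fin (2 ^ b) =>
      ∃ y : Fin n → ℤ, y ≠ 0 ∧ (∀ i, |y i| ≤ (M : ℤ)) ∧
        |∑ i, ((a i : ℕ) : ℤ) * y i| ≤ (M : ℤ)))
      ⊆ Y.biUnion (fun y => Finset.univ.filter (fun a : Fin n → Fin (2 ^ b) =>
        |∑ i, ((a i : ℕ) : ℤ) * y i| ≤ (M : ℤ))) := by
    intro a ha
    simp only [Finset.mem_filter, Finset.mem_univ, true_and] at ha
    obtain ⟨y, hy0, hy1, hy2⟩ := ha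
    refine Finset.mem_biUnion.mpr ⟨y, ?_, ?_⟩
    · simp only [hY, Finset.mem_filter, Fintype.mem_piFinset, Finset.mem_Icc]
      exact ⟨fun i => abs_le.mp (hy1 i), hy0⟩
    · simp only [Finset.mem_filter, Finset.mem_univ, true_and]
      exact hy2
  refine (Finset.card_le_card hsub).trans ((Finset.card_biUnion_le).trans ?_)
  have hfib : ∀ y ∈ Y, (Finset.univ.filter (fun a : Fin n → Fin (2 ^ b) =>
      |∑ i, ((a i : ℕ) : ℤ) * y i| ≤ (M : ℤ))).card ≤ (2 * M + 1) * (2 ^ b) ^ (n - 1) := by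
    intro y hy
    simp only [hY, Finset.mem_filter] at hy
    obtain ⟨i₀, hi₀⟩ := Function.ne_iff.mp hy.2
    exact fiber_bound n b M y i₀ hi₀
  calc ∑ y ∈ Y, _ ≤ Y.card * ((2 * M + 1) * (2 ^ b) ^ (n - 1)) :=
        Finset.sum_le_card_nsmul _ _ _ hfib
    _ ≤ (2 * M + 1) ^ n * ((2 * M + 1) * (2 ^ b) ^ (n - 1)) := by
        apply Nat.mul_le_mul_right
        calc Y.card ≤ (Fintype.piFinset (fun _ : Fin n =>
              Finset.Icc (-(M : ℤ)) (M : ℤ))).card := Finset.card_filter_le _ _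
          _ = (2 * M + 1) ^ n := by
              rw [Fintype.card_piFinset]
              simp only [Int.card_Icc]
              have h1 : ((M : ℤ) + 1 - -(M : ℤ)).toNat = 2 * M + 1 := by omega
              rw [h1, Finset.prod_const, Finset.card_univ, Fintype.card_fin]
    _ = (2 * M + 1) ^ (n + 1) * (2 ^ b) ^ (n - 1) := by ring

lemma abs_int_le_floor {z : ℤ} {r : ℝ} (h : |(z : ℝ)| ≤ r) : |z| ≤ ((⌊r⌋₊ : ℕ) : ℤ) := by
  have h0 : (z.natAbs : ℝ) ≤ r := by
    rw [Nat.cast_natAbs]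
    exact_mod_cast h
  have h2 : z.natAbs ≤ ⌊r⌋₊ := Nat.le_floor h0
  rw [Int.abs_eq_natAbs]
  exact_mod_cast h2

lemma Mr_le (n : ℕ) : (2 : ℝ) ^ ((n : ℝ) / 2 + 1) * Real.sqrt n ≤ (2 : ℝ) ^ (n + 1) := by
  have hs : Real.sqrt n ≤ (2 : ℝ) ^ ((n : ℝ) / 2) := by
    have h1 : (2 : ℝ) ^ ((n : ℝ) / 2) = Real.sqrt ((2 : ℝ) ^ (n : ℕ)) := by
      rw [Real.sqrt_eq_rpow, ← Real.rpow_natCast 2 n, ← Real.rpow_mul (by norm_num)]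
      ring_nf
    rw [h1]
    apply Real.sqrt_le_sqrt
    exact_mod_cast (@Nat.lt_two_pow_self n).le
  have hpos : (0:ℝ) ≤ (2 : ℝ) ^ ((n : ℝ) / 2 + 1) := by positivity
  calc (2 : ℝ) ^ ((n : ℝ) / 2 + 1) * Real.sqrt n
      ≤ (2 : ℝ) ^ ((n : ℝ) / 2 + 1) * (2 : ℝ) ^ ((n : ℝ) / 2) :=
        mul_le_mul_of_nonneg_left hs hpos
    _ = (2 : ℝ) ^ ((n : ℝ) + 1) := by
        rw [← Real.rpow_add (by norm_num)]
        ring_nf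
    _ = (2 : ℝ) ^ (n + 1) := by
        rw [show ((n : ℝ) + 1) = ((n + 1 : ℕ) : ℝ) by push_cast; ring, Real.rpow_natCast]

/-- For `a_1,…,a_n` i.i.d. uniform on `{0,…,2^b − 1}` with `b ≥ Cn²` for a
sufficiently large absolute constant `C`, with probability `1 − o(1)` there is no nonzero
integer vector `y` with `‖y‖_∞ ≤ 2^{n/2+1}√n` and `|Σ_i a_i y_i| ≤ 2^{n/2+1}√n`.
(Probability is formalized as a counting ratio over all `2^{bn}` tuples.) -/
theorem stmt16 : ∃ C : ℝ, 0 < C ∧ ∀ b : ℕ → ℕ, (∀ n : ℕ, C * n ^ 2 ≤ b n) →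
    Tendsto (fun n : ℕ =>
      ((Finset.univ.filter (fun a : Fin n → Fin (2 ^ b n) =>
          ∃ y : Fin n → ℤ, y ≠ 0 ∧
            (∀ i, |(y i : ℝ)| ≤ (2 : ℝ) ^ ((n : ℝ) / 2 + 1) * Real.sqrt n) ∧
            |∑ i, (a i : ℝ) * (y i : ℝ)| ≤ (2 : ℝ) ^ ((n : ℝ) / 2 + 1) * Real.sqrt n)).card : ℝ)
        / ((2 : ℝ) ^ b n) ^ n)
      atTop (nhds 0) := by
  refine ⟨9, by norm_num, fun b hb => ?_⟩
  have hbn : ∀ n : ℕ, 9 * n ^ 2 ≤ b n := by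
    intro n
    have := hb n
    exact_mod_cast this
  apply squeeze_zero' (g := fun n : ℕ => (1 / 2 : ℝ) ^ n)
  · filter_upwards with n
    positivity
  · filter_upwards [eventually_ge_atTop 1] with n hn
    set M := ⌊(2 : ℝ) ^ ((n : ℝ) / 2 + 1) * Real.sqrt n⌋₊ with hMdef
    -- step A: real filter ⊆ int filter
    have hsub : (Finset.univ.filter (fun a : Fin n → Fin (2 ^ b n) =>
          ∃ y : Fin n → ℤ, y ≠ 0 ∧
            (∀ i, |(y i : ℝ)| ≤ (2 : ℝ) ^ ((n : ℝ) / 2 + 1) * Real.sqrt n) ∧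
            |∑ i, (a i : ℝ) * (y i : ℝ)| ≤ (2 : ℝ) ^ ((n : ℝ) / 2 + 1) * Real.sqrt n))
        ⊆ (Finset.univ.filter (fun a : Fin n → Fin (2 ^ b n) =>
          ∃ y : Fin n → ℤ, y ≠ 0 ∧ (∀ i, |y i| ≤ (M : ℤ)) ∧
            |∑ i, ((a i : ℕ) : ℤ) * y i| ≤ (M : ℤ))) := by
      intro a ha
      simp only [Finset.mem_filter, Finset.mem_univ, true_and] at ha ⊢
      obtain ⟨y, hy0, hy1, hy2⟩ := ha
      refine ⟨y, hy0, fun i => abs_int_le_floor (hy1 i), ?_⟩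
      apply abs_int_le_floor
      have : ((∑ i, ((a i : ℕ) : ℤ) * y i : ℤ) : ℝ) = ∑ i, (a i : ℝ) * (y i : ℝ) := by
        push_cast
        rfl
      rw [this]
      exact hy2
    have hcard : (Finset.univ.filter (fun a : Fin n → Fin (2 ^ b n) =>
          ∃ y : Fin n → ℤ, y ≠ 0 ∧
            (∀ i, |(y i : ℝ)| ≤ (2 : ℝ) ^ ((n : ℝ) / 2 + 1) * Real.sqrt n) ∧
            |∑ i, (a i : ℝ) * (y i : ℝ)| ≤ (2 : ℝ) ^ ((n : ℝ) / 2 + 1) * Real.sqrt n)).card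
        ≤ (2 * M + 1) ^ (n + 1) * (2 ^ b n) ^ (n - 1) :=
      le_trans (Finset.card_le_card hsub) (count_bound n (b n) M)
    -- step B: nat arithmetic
    have hM : M ≤ 2 ^ (n + 1) := by
      have h1 : ((2 ^ (n + 1) : ℕ) : ℝ) = (2 : ℝ) ^ (n + 1) := by push_cast; ring
      have := Nat.floor_mono (le_trans (Mr_le n) h1.ge)
      rwa [Nat.floor_natCast] at this
    have ht : 1 ≤ 2 ^ (n + 1) := Nat.one_le_two_pow
    have h23 : 2 * M + 1 ≤ 2 ^ (n + 3) := by
      have h4 : (2 : ℕ) ^ (n + 3) = 4 * 2 ^ (n + 1) := by ring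
      clear hsub hcard
      omega
    have hexp : (n + 3) * (n + 1) + n ≤ b n := by
      clear hsub hcard
      have h9 : (n + 3) * (n + 1) + n ≤ 9 * n ^ 2 := by nlinarith
      exact le_trans h9 (hbn n)
    have hkey : (2 * M + 1) ^ (n + 1) * 2 ^ n ≤ 2 ^ b n := by
      calc (2 * M + 1) ^ (n + 1) * 2 ^ n ≤ (2 ^ (n + 3)) ^ (n + 1) * 2 ^ n :=
            Nat.mul_le_mul_right _ (Nat.pow_le_pow_left h23 _)
        _ = 2 ^ ((n + 3) * (n + 1) + n) := by rw [← pow_mul, ← pow_add]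
        _ ≤ 2 ^ b n := Nat.pow_le_pow_right (by norm_num) hexp
    -- step C: real chain
    have hN : (0 : ℝ) < (2 : ℝ) ^ b n := by positivity
    have hNe : ((2 : ℝ) ^ b n) ^ (n - 1) ≠ 0 := by positivity
    calc ((Finset.univ.filter (fun a : Fin n → Fin (2 ^ b n) =>
          ∃ y : Fin n → ℤ, y ≠ 0 ∧
            (∀ i, |(y i : ℝ)| ≤ (2 : ℝ) ^ ((n : ℝ) / 2 + 1) * Real.sqrt n) ∧
            |∑ i, (a i : ℝ) * (y i : ℝ)| ≤ (2 : ℝ) ^ ((n : ℝ) / 2 + 1) * Real.sqrt n)).card : ℝ)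
        / ((2 : ℝ) ^ b n) ^ n
        ≤ (((2 * M + 1) ^ (n + 1) * (2 ^ b n) ^ (n - 1) : ℕ) : ℝ) / ((2 : ℝ) ^ b n) ^ n := by
          gcongr
      _ = ((2 * M + 1 : ℕ) : ℝ) ^ (n + 1) / (2 : ℝ) ^ b n := by
          have hsplit : ((2 : ℝ) ^ b n) ^ n = ((2 : ℝ) ^ b n) ^ (n - 1) * (2 : ℝ) ^ b n := by
            rw [← pow_succ]
            congr 1
            clear hsub hcard
            omega
          push_cast
          rw [hsplit, mul_comm ((2 * (M:ℝ) + 1) ^ (n + 1)) (((2:ℝ) ^ b n) ^ (n - 1)),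
            mul_div_mul_left _ _ hNe]
      _ ≤ (1 / 2) ^ n := by
          have hA2 : ((2 * M + 1 : ℕ) : ℝ) ^ (n + 1) * 2 ^ n ≤ (2 : ℝ) ^ b n := by
            exact_mod_cast hkey
          have h12 : ((1 : ℝ) / 2) ^ n = 1 / 2 ^ n := by rw [div_pow, one_pow]
          rw [h12, div_le_div_iff₀ hN (by positivity)]
          linarith
  · exact tendsto_pow_atTop_nhds_zero_of_lt_one (by norm_num) (by norm_num)
end
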